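/- arXiv:2503.21090 — 3 statements merged into one kernel-verified Lean document; each statement's English description precedes it below -/
import Mathlib

section
/- Let q(z) = ∑_{j=−(n−1)}^{n−1} a_j z^j be a Laurent polynomial that is not identically zero, real-valued and nonnegative on the unit circle. Suppose Q is an n×n Hermitian positive semidefinite matrix with tr_j(Q) = a_j for all −n < j < n, and suppose Q[0,0] is maximal, i.e., Q[0,0] ≥ Q'[0,0] for every n×n Hermitian positive semidefinite Q' with tr_j(Q') = a_j for all −n < j < n. Then Q has rank 1; moreover there exists a polynomial p(z) = ∑_{j=0}^{n−1} b_j z^j with |p(z)|² = q(z) for all |z| = 1, such that Q[i,j] = conj(b_i)·b_j for all i,j. -/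
noncomputable section
open Matrix Finset
open scoped ComplexOrder

/-- The generalized trace `tr_j(A)`: the sum of the entries `A[i,i']` with `i' - i = j`
(the `j`-th super/subdiagonal); it is `0` for `|j| ≥ n`. -/
def gtr (n : ℕ) (A : Matrix (Fin n) (Fin n) ℂ) (j : ℤ) : ℂ :=
  ∑ i : Fin n, ∑ i' : Fin n, if ((i' : ℕ) : ℤ) - ((i : ℕ) : ℤ) = j then A i i' else 0

/-- Evaluation of the Laurent polynomial `q(z) = ∑_{j=-(n-1)}^{n-1} a_j z^j`. -/
def leval (n : ℕ) (a : ℤ → ℂ) (z : ℂ) : ℂ :=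
  ∑ j ∈ Finset.Icc (-(n : ℤ) + 1) ((n : ℤ) - 1), a j * z ^ j

namespace Stmt2Aux

/-- The rank-one "Gram matrix" of a vector. -/
def Mv (n : ℕ) (u : Fin n → ℂ) : Matrix (Fin n) (Fin n) ℂ :=
  Matrix.of fun i j => (starRingEnd ℂ) (u i) * u j

lemma Mv_apply (n : ℕ) (u : Fin n → ℂ) (i j : Fin n) :
    Mv n u i j = (starRingEnd ℂ) (u i) * u j := rfl

/-- Extension of a vector `Fin n → ℂ` to `ℤ`, by zero. -/
def zext (n : ℕ) (u : Fin n → ℂ) (k : ℤ) : ℂ :=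
  if h : 0 ≤ k ∧ k < n then u ⟨k.toNat, by omega⟩ else 0

lemma zext_coe (n : ℕ) (u : Fin n → ℂ) (i : Fin n) : zext n u ((i : ℕ) : ℤ) = u i := by
  have h : (0 : ℤ) ≤ ((i : ℕ) : ℤ) ∧ ((i : ℕ) : ℤ) < n := ⟨Int.natCast_nonneg _, by exact_mod_cast i.2⟩
  rw [zext, dif_pos h]
  exact congrArg u (Fin.ext (by simp))

lemma gtr_Mv (n : ℕ) (u : Fin n → ℂ) (j : ℤ) :
    gtr n (Mv n u) j = ∑ i : Fin n, (starRingEnd ℂ) (u i) * zext n u ((i : ℕ) + j) := by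
  unfold gtr
  refine Finset.sum_congr rfl fun i _ => ?_
  by_cases hc : (0 : ℤ) ≤ (i : ℕ) + j ∧ ((i : ℕ) : ℤ) + j < n
  · set i0 : Fin n := ⟨((i : ℕ) + j).toNat, by omega⟩ with hi0
    rw [Finset.sum_eq_single i0]
    · rw [if_pos (by simp [hi0]; omega), Mv_apply]
      congr 1
      rw [← zext_coe n u i0]
      congr 1
      simp [hi0]; omega
    · intro i' _ hne
      rw [if_neg]
      intro h
      exact hne (Fin.ext (by simp [hi0]; omega))
    · intro h; exact absurd (Finset.mem_univ i0) h
  · rw [Finset.sum_eq_zero, eq_comm]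
    · rw [zext, dif_neg (by omega), mul_zero]
    · intro i' _
      rw [if_neg]
      have := i'.2
      intro h; push_cast at hc h; omega

lemma gtr_add (n : ℕ) (A B : Matrix (Fin n) (Fin n) ℂ) (j : ℤ) :
    gtr n (A + B) j = gtr n A j + gtr n B j := by
  unfold gtr
  rw [← Finset.sum_add_distrib]
  refine Finset.sum_congr rfl fun i _ => ?_
  rw [← Finset.sum_add_distrib]
  refine Finset.sum_congr rfl fun i' _ => ?_
  split <;> simp

/-- Left shift of a vector (dropping the first coordinate). -/
def shf (n : ℕ) (u : Fin n → ℂ) : Fin n → ℂ := fun i => zext n u ((i : ℕ) + 1)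

lemma zext_shf (n : ℕ) (u : Fin n → ℂ) (hu : zext n u 0 = 0) (k : ℤ) :
    zext n (shf n u) k = zext n u (k + 1) := by
  by_cases h : (0 : ℤ) ≤ k ∧ k < n
  · rw [zext, dif_pos h]
    show zext n u _ = _
    congr 1
    push_cast
    omega
  · rw [zext, dif_neg h]
    by_cases h2 : (0 : ℤ) ≤ k + 1 ∧ k + 1 < n
    · have : k = -1 := by omega
      subst this
      simpa using hu.symm
    · rw [zext, dif_neg h2]

lemma gtr_shf (n : ℕ) (u : Fin n → ℂ) (hu : zext n u 0 = 0) (j : ℤ) :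
    gtr n (Mv n (shf n u)) j = gtr n (Mv n u) j := by
  rw [gtr_Mv, gtr_Mv]
  have key : ∀ v : Fin n → ℂ, (∑ i : Fin n, (starRingEnd ℂ) (v i) * zext n v ((i : ℕ) + j))
      = ∑ m ∈ Finset.range n,
          (starRingEnd ℂ) (zext n v ((m : ℕ) : ℤ)) * zext n v (((m : ℕ) : ℤ) + j) := by
    intro v
    rw [← Fin.sum_univ_eq_sum_range
      (fun m : ℕ => (starRingEnd ℂ) (zext n v ((m : ℕ) : ℤ)) * zext n v (((m : ℕ) : ℤ) + j)) n]
    exact Finset.sum_congr rfl fun i _ => by rw [zext_coe]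
  rw [key, key]
  set g : ℕ → ℂ := fun m => (starRingEnd ℂ) (zext n u ((m : ℕ) : ℤ)) * zext n u (((m : ℕ) : ℤ) + j)
    with hg
  have hstep : ∀ m ∈ Finset.range n,
      (starRingEnd ℂ) (zext n (shf n u) ((m : ℕ) : ℤ)) * zext n (shf n u) (((m : ℕ) : ℤ) + j)
        = g (m + 1) := by
    intro m _
    rw [zext_shf n u hu, zext_shf n u hu, hg]
    push_cast
    ring_nf
  rw [Finset.sum_congr rfl hstep]
  have h0 : g 0 = 0 := by simp only [hg]; rw [Nat.cast_zero, hu, map_zero, zero_mul]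
  have hn : g n = 0 := by
    simp only [hg]
    rw [zext, dif_neg (by omega), map_zero, zero_mul]
  have e1 := Finset.sum_range_succ' g n
  have e2 := Finset.sum_range_succ g n
  rw [h0, add_zero] at e1
  rw [hn, add_zero] at e2
  rw [← e1, e2]

lemma exists_lead (n : ℕ) (m : ℕ) : ∀ (u : Fin n → ℂ) (hm : m < n), u ⟨m, hm⟩ ≠ 0 →
    ∃ w : Fin n → ℂ, (∀ j, gtr n (Mv n w) j = gtr n (Mv n u) j) ∧ w ⟨0, by omega⟩ ≠ 0 := by
  induction m with
  | zero => exact fun u hm h => ⟨u, fun j => rfl, h⟩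
  | succ m ih =>
    intro u hm hu
    by_cases h0 : u ⟨0, by omega⟩ = 0
    · have hz : zext n u 0 = 0 := by
        rw [zext, dif_pos ⟨le_refl 0, by omega⟩]
        exact h0
      have hsm : shf n u ⟨m, by omega⟩ ≠ 0 := by
        show zext n u _ ≠ 0
        have : ((⟨m, by omega⟩ : Fin n) : ℕ) + (1 : ℤ) = ((⟨m + 1, hm⟩ : Fin n) : ℕ) := by
          push_cast; ring
        rw [this, zext_coe]
        exact hu
      obtain ⟨w, hw, hw0⟩ := ih (shf n u) (by omega) hsm
      exact ⟨w, fun j => (hw j).trans (gtr_shf n u hz j), hw0⟩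
    · exact ⟨u, fun j => rfl, h0⟩

lemma Mv_psd (n : ℕ) (u : Fin n → ℂ) : (Mv n u).PosSemidef := by
  refine Matrix.PosSemidef.of_dotProduct_mulVec_nonneg ?_ ?_
  · ext i j
    simp only [conjTranspose_apply, Mv, Matrix.of_apply, star_mul', Complex.star_def,
      Complex.conj_conj]
    exact mul_comm _ _
  · intro x
    have : star x ⬝ᵥ (Mv n u *ᵥ x) = star (∑ i, u i * x i) * (∑ i, u i * x i) := by
      simp only [dotProduct, mulVec, Mv, Matrix.of_apply, Pi.star_apply, star_sum, star_mul',
        Complex.star_def]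
      rw [Finset.sum_mul_sum]
      refine Finset.sum_congr rfl fun i _ => ?_
      rw [Finset.mul_sum]
      refine Finset.sum_congr rfl fun j _ => ?_
      ring
    rw [this]
    exact star_mul_self_nonneg _

lemma psd_add {n : ℕ} {A B : Matrix (Fin n) (Fin n) ℂ} (hA : A.PosSemidef) (hB : B.PosSemidef) :
    (A + B).PosSemidef := by
  refine Matrix.PosSemidef.of_dotProduct_mulVec_nonneg (hA.1.add hB.1) fun x => ?_
  rw [add_mulVec, dotProduct_add]
  exact add_nonneg (hA.dotProduct_mulVec_nonneg x) (hB.dotProduct_mulVec_nonneg x)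

lemma psd_sum {n : ℕ} {κ : Type*} [DecidableEq κ] (s : Finset κ)
    (f : κ → Matrix (Fin n) (Fin n) ℂ) (h : ∀ k ∈ s, (f k).PosSemidef) :
    (∑ k ∈ s, f k).PosSemidef := by
  induction s using Finset.induction_on with
  | empty => simpa using Matrix.PosSemidef.zero
  | insert _ _ hk ih =>
    rw [Finset.sum_insert hk]
    exact psd_add (h _ (Finset.mem_insert_self _ _))
      (ih fun k hks => h k (Finset.mem_insert_of_mem hks))

lemma mix {n : ℕ} (α β : ℂ) (h : (starRingEnd ℂ) α * α + (starRingEnd ℂ) β * β = 1)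
    (r1 r2 : Fin n → ℂ) :
    Mv n (α • r1 + β • r2) + Mv n ((-((starRingEnd ℂ) β)) • r1 + ((starRingEnd ℂ) α) • r2)
      = Mv n r1 + Mv n r2 := by
  ext i j
  simp only [Mv, Matrix.add_apply, Matrix.of_apply, Pi.add_apply, Pi.smul_apply, smul_eq_mul,
    map_add, _root_.map_mul, map_neg, Complex.conj_conj]
  linear_combination ((starRingEnd ℂ) (r1 i) * r1 j + (starRingEnd ℂ) (r2 i) * r2 j) * h

end Stmt2Aux

/-- A PSD Gram matrix representation `Q` of a nontrivial nonnegative Laurent polynomial `q`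
with maximal top-left entry has rank 1, and `Q = p* pᵀ` for a spectral factor `p` of `q`. -/
theorem stmt_2 (n : ℕ) (hn : 0 < n) (a : ℤ → ℂ)
    -- q is not identically zero
    (hnz : ∃ j ∈ Finset.Icc (-(n : ℤ) + 1) ((n : ℤ) - 1), a j ≠ 0)
    -- q is real-valued and nonnegative on the unit circle
    (hpos : ∀ z : ℂ, ‖z‖ = 1 →
      (leval n a z).im = 0 ∧ 0 ≤ (leval n a z).re)
    (Q : Matrix (Fin n) (Fin n) ℂ)
    -- Q is a Hermitian PSD Gram matrix representation of q
    (hQ : Q.PosSemidef)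
    (hQrep : ∀ j : ℤ, -(n : ℤ) < j → j < (n : ℤ) → gtr n Q j = a j)
    -- the top-left entry of Q is maximal among all such representations
    (hQmax : ∀ Q' : Matrix (Fin n) (Fin n) ℂ, Q'.PosSemidef →
      (∀ j : ℤ, -(n : ℤ) < j → j < (n : ℤ) → gtr n Q' j = a j) →
      (Q' ⟨0, hn⟩ ⟨0, hn⟩).re ≤ (Q ⟨0, hn⟩ ⟨0, hn⟩).re) :
    Q.rank = 1 ∧
    ∃ b : Fin n → ℂ,
      (∀ z : ℂ, ‖z‖ = 1 →
        ((‖∑ i : Fin n, b i * z ^ (i : ℕ)‖ : ℝ) : ℂ) ^ 2 = leval n a z) ∧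
      (∀ i j : Fin n, Q i j = (starRingEnd ℂ) (b i) * b j) := by
  classical
  open Stmt2Aux in
  set i0 : Fin n := ⟨0, hn⟩ with hi0
  obtain ⟨B, hB⟩ : ∃ B : Matrix (Fin n) (Fin n) ℂ, Q = Bᴴ * B := by
    open scoped MatrixOrder in
    exact ⟨CFC.sqrt Q, by rw [(CFC.sqrt_nonneg Q).posSemidef.1.eq, CFC.sqrt_mul_sqrt_self Q hQ.nonneg]⟩
  set r : Fin n → Fin n → ℂ := fun k i => B k i with hr
  have hQsum : Q = ∑ k : Fin n, Mv n (r k) := by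
    rw [hB]; ext i j
    simp [Matrix.mul_apply, Matrix.conjTranspose_apply, Mv, Matrix.sum_apply, hr]
  obtain ⟨j₁, hj₁, haj₁⟩ := hnz
  rw [Finset.mem_Icc] at hj₁
  have hQne : Q ≠ 0 := by
    intro h
    apply haj₁
    rw [← hQrep j₁ (by omega) (by omega), h]
    simp [gtr]
  -- Step 1: no two rows of `B` are linearly independent
  have hnoLI : ∀ k1 k2 : Fin n, ¬ LinearIndependent ℂ ![r k1, r k2] := by
    intro k1 k2 hLI
    have hpair := LinearIndependent.pair_iff.mp hLI
    have hne : k1 ≠ k2 := by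
      intro h
      subst h
      have := hpair 1 (-1) (by funext i; simp)
      simp at this
    obtain ⟨α, β, hβ0, hker, hnorm⟩ : ∃ α β : ℂ, ¬(α = 0 ∧ β = 0) ∧
        α * r k1 i0 + β * r k2 i0 = 0 ∧
        (starRingEnd ℂ) α * α + (starRingEnd ℂ) β * β = 1 := by
      by_cases h : r k1 i0 = 0
      · exact ⟨1, 0, by simp, by simp [h], by simp⟩
      · set c1 := r k1 i0
        set c2 := r k2 i0
        have hpos1 : 0 < Complex.normSq c2 + Complex.normSq c1 :=
          add_pos_of_nonneg_of_pos (Complex.normSq_nonneg _) (Complex.normSq_pos.mpr h)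
        set t := Real.sqrt (Complex.normSq c2 + Complex.normSq c1) with htdef
        have ht : (0:ℝ) < t := Real.sqrt_pos.mpr hpos1
        have htC : ((t : ℝ) : ℂ) ≠ 0 := by exact_mod_cast ht.ne'
        have htt : ((t : ℝ) : ℂ) * t = ((Complex.normSq c2 + Complex.normSq c1 : ℝ) : ℂ) := by
          rw [← Complex.ofReal_mul, Real.mul_self_sqrt hpos1.le]
        refine ⟨c2 / t, -c1 / t, ?_, ?_, ?_⟩
        · rintro ⟨-, h2⟩
          apply h
          rw [div_eq_zero_iff, neg_eq_zero] at h2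
          exact h2.resolve_right htC
        · field_simp
          ring
        · rw [map_div₀, map_div₀, map_neg, Complex.conj_ofReal]
          rw [div_mul_div_comm, div_mul_div_comm, ← add_div,
            div_eq_one_iff_eq (mul_ne_zero htC htC), htt, neg_mul_neg,
            ← Complex.normSq_eq_conj_mul_self, ← Complex.normSq_eq_conj_mul_self, Complex.ofReal_add]
    set u : Fin n → ℂ := α • r k1 + β • r k2 with hu
    set v : Fin n → ℂ := (-((starRingEnd ℂ) β)) • r k1 + ((starRingEnd ℂ) α) • r k2 with hv
    have hmix := Stmt2Aux.mix α β hnorm (r k1) (r k2)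
    have hu0 : u i0 = 0 := by
      simp only [hu, Pi.add_apply, Pi.smul_apply, smul_eq_mul]
      exact hker
    have hune : u ≠ 0 := fun h => hβ0 (hpair α β h)
    obtain ⟨im, hum⟩ : ∃ i, u i ≠ 0 := Function.ne_iff.mp hune
    obtain ⟨w, hw, hw0⟩ := Stmt2Aux.exists_lead n (im : ℕ) u im.2 (by simpa using hum)
    set s : Finset (Fin n) := (Finset.univ.erase k1).erase k2 with hs
    have hk2mem : k2 ∈ Finset.univ.erase k1 :=
      Finset.mem_erase.mpr ⟨hne.symm, Finset.mem_univ _⟩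
    have hsplit : (∑ k : Fin n, Mv n (r k))
        = ((∑ k ∈ s, Mv n (r k)) + Mv n (r k2)) + Mv n (r k1) := by
      rw [← Finset.sum_erase_add _ _ (Finset.mem_univ k1), ← Finset.sum_erase_add _ _ hk2mem]
    set Q' : Matrix (Fin n) (Fin n) ℂ := ((∑ k ∈ s, Mv n (r k)) + Mv n v) + Mv n w with hQ'
    have hQ'psd : Q'.PosSemidef :=
      psd_add (psd_add (psd_sum s _ fun k _ => Mv_psd n (r k)) (Mv_psd n v)) (Mv_psd n w)
    have hmixg : ∀ j, gtr n (Mv n u) j + gtr n (Mv n v) j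
        = gtr n (Mv n (r k1)) j + gtr n (Mv n (r k2)) j := by
      intro j
      have := congrArg (fun M => gtr n M j) hmix
      simpa only [gtr_add] using this
    have hgtr' : ∀ j, gtr n Q' j = gtr n Q j := by
      intro j
      rw [hQ', gtr_add, gtr_add, hw j, hQsum, hsplit, gtr_add, gtr_add]
      linear_combination hmixg j
    have hmix00 : Mv n u i0 i0 + Mv n v i0 i0
        = Mv n (r k1) i0 i0 + Mv n (r k2) i0 i0 := by
      rw [← Matrix.add_apply, hmix, Matrix.add_apply]
    have hu00 : Mv n u i0 i0 = 0 := by rw [Mv_apply, hu0, mul_zero]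
    have hcorner : Q' i0 i0 = Q i0 i0 + (starRingEnd ℂ) (w i0) * w i0 := by
      have hQ00 : Q i0 i0 = ((∑ k ∈ s, Mv n (r k)) i0 i0 + Mv n (r k2) i0 i0)
          + Mv n (r k1) i0 i0 := by
        rw [hQsum, hsplit]; simp [Matrix.add_apply]
      rw [hQ', Matrix.add_apply, Matrix.add_apply, hQ00, ← Mv_apply n w]
      rw [hu00] at hmix00
      linear_combination hmix00
    have hlt : (Q i0 i0).re < (Q' i0 i0).re := by
      rw [hcorner, Complex.add_re]
      have h1 : ((starRingEnd ℂ) (w i0) * w i0).re = Complex.normSq (w i0) := by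
        rw [← Complex.normSq_eq_conj_mul_self, Complex.ofReal_re]
      rw [h1]
      have := Complex.normSq_pos.mpr (show w i0 ≠ 0 from hw0)
      linarith
    exact absurd (hQmax Q' hQ'psd fun j hj1 hj2 => (hgtr' j).trans (hQrep j hj1 hj2))
      (not_le.mpr hlt)
  -- Step 2: all rows are multiples of a single vector
  obtain ⟨k0, hk0⟩ : ∃ k0, r k0 ≠ 0 := by
    by_contra h
    push_neg at h
    apply hQne
    rw [hQsum]
    exact Finset.sum_eq_zero fun k _ => by ext i j; simp [Mv, h k]
  have hdep : ∀ k, ∃ c : ℂ, r k = c • r k0 := by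
    intro k
    have hno := hnoLI k k0
    rw [LinearIndependent.pair_iff] at hno
    push_neg at hno
    obtain ⟨sc, t, heq, hst⟩ := hno
    by_cases hsc : sc = 0
    · exfalso
      subst hsc
      rw [zero_smul, zero_add] at heq
      exact hk0 ((smul_eq_zero.mp heq).resolve_left (hst rfl))
    · refine ⟨-(t/sc), ?_⟩
      funext i
      have h2 := congrFun heq i
      simp only [Pi.add_apply, Pi.smul_apply, smul_eq_mul, Pi.zero_apply] at h2
      rw [Pi.smul_apply, smul_eq_mul]
      have hinv : sc⁻¹ * sc = 1 := inv_mul_cancel₀ hsc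
      linear_combination sc⁻¹ * h2 - r k i * hinv
  choose c hc using hdep
  set S : ℝ := ∑ k : Fin n, Complex.normSq (c k) with hS
  have hSnn : 0 ≤ S := Finset.sum_nonneg fun k _ => Complex.normSq_nonneg _
  set b : Fin n → ℂ := fun i => ((Real.sqrt S : ℝ) : ℂ) * r k0 i with hb
  have h2 : ((Real.sqrt S : ℝ) : ℂ) * ((Real.sqrt S : ℝ) : ℂ) = ((S : ℝ) : ℂ) := by
    rw [← Complex.ofReal_mul, Real.mul_self_sqrt hSnn]
  have h3 : ((S : ℝ) : ℂ) = ∑ k : Fin n, (starRingEnd ℂ) (c k) * c k := by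
    rw [hS, Complex.ofReal_sum]
    exact Finset.sum_congr rfl fun k _ => Complex.normSq_eq_conj_mul_self
  have hQb : ∀ i j, Q i j = (starRingEnd ℂ) (b i) * b j := by
    intro i j
    have h1 : Q i j = (∑ k : Fin n, (starRingEnd ℂ) (c k) * c k)
        * ((starRingEnd ℂ) (r k0 i) * r k0 j) := by
      rw [hQsum, Matrix.sum_apply, Finset.sum_mul]
      refine Finset.sum_congr rfl fun k _ => ?_
      rw [Mv_apply, hc k]
      simp only [Pi.smul_apply, smul_eq_mul, _root_.map_mul]
      ring
    have h4 : (starRingEnd ℂ) (b i) * b j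
        = ((S : ℝ) : ℂ) * ((starRingEnd ℂ) (r k0 i) * r k0 j) := by
      simp only [hb, _root_.map_mul, Complex.conj_ofReal]
      rw [← h2]
      ring
    rw [h1, h4, h3]
  have hbne : ∃ j0, b j0 ≠ 0 := by
    by_contra h
    push_neg at h
    apply hQne
    ext i j
    rw [hQb i j, h j, mul_zero, Matrix.zero_apply]
  obtain ⟨j0, hj0b⟩ := hbne
  have hQrow : Q = (Matrix.replicateRow (Fin 1) b)ᴴ * Matrix.replicateRow (Fin 1) b := by
    ext i j
    rw [hQb]
    simp [Matrix.mul_apply, Matrix.conjTranspose_apply, Matrix.replicateRow_apply, Fin.sum_univ_one]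
  have hrank_le : Q.rank ≤ 1 := by
    rw [hQrow, Matrix.rank_conjTranspose_mul_self]
    simpa using Matrix.rank_le_card_height (Matrix.replicateRow (Fin 1) b)
  have hrank_pos : 0 < Q.rank := by
    have hx : Q.mulVecLin (Pi.single j0 1) ≠ 0 := by
      intro h
      have h5 := congrFun h j0
      rw [Matrix.mulVecLin_apply, Matrix.mulVec_single] at h5
      simp only [Pi.zero_apply, Pi.smul_apply, op_smul_eq_mul, Matrix.col_apply, mul_one] at h5
      rw [hQb j0 j0] at h5
      rcases mul_eq_zero.mp h5 with h6 | h6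
      · exact hj0b (by simpa using h6)
      · exact hj0b h6
    have hpos' : 0 < Module.finrank ℂ ↥(LinearMap.range Q.mulVecLin) :=
      Module.finrank_pos_iff_exists_ne_zero.mpr
        ⟨⟨Q.mulVecLin (Pi.single j0 1), LinearMap.mem_range_self _ _⟩,
          fun h => hx (by simpa [Subtype.ext_iff] using h)⟩
    exact hpos'
  refine ⟨le_antisymm hrank_le hrank_pos, b, ?_, hQb⟩
  intro z hz
  have hzc : (starRingEnd ℂ) z * z = 1 := by
    rw [mul_comm, Complex.mul_conj]
    rw [Complex.normSq_eq_norm_sq, hz]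
    norm_num
  have hz0 : z ≠ 0 := by
    intro h
    rw [h] at hz
    simp at hz
  have hzinv : (starRingEnd ℂ) z = z⁻¹ := eq_inv_of_mul_eq_one_left hzc
  set sE : ℂ := ∑ i : Fin n, b i * z ^ (i : ℕ) with hsE
  have hLHS : ((‖sE‖ : ℝ) : ℂ) ^ 2 = (starRingEnd ℂ) sE * sE := by
    rw [← Complex.ofReal_pow, Complex.sq_norm]
    exact Complex.normSq_eq_conj_mul_self
  rw [hLHS]
  unfold leval
  have step1 : (∑ j ∈ Finset.Icc (-(n : ℤ) + 1) ((n : ℤ) - 1), a j * z ^ j)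
      = ∑ j ∈ Finset.Icc (-(n : ℤ) + 1) ((n : ℤ) - 1), gtr n Q j * z ^ j := by
    refine Finset.sum_congr rfl fun j hj => ?_
    rw [Finset.mem_Icc] at hj
    rw [hQrep j (by omega) (by omega)]
  rw [step1]
  have expand : (∑ j ∈ Finset.Icc (-(n : ℤ) + 1) ((n : ℤ) - 1), gtr n Q j * z ^ j)
      = ∑ i : Fin n, ∑ i' : Fin n, Q i i' * z ^ (((i' : ℕ) : ℤ) - ((i : ℕ) : ℤ)) := by
    unfold gtr
    simp only [Finset.sum_mul, ite_mul, zero_mul]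
    rw [Finset.sum_comm]
    refine Finset.sum_congr rfl fun i _ => ?_
    rw [Finset.sum_comm]
    refine Finset.sum_congr rfl fun i' _ => ?_
    rw [Finset.sum_ite_eq, if_pos]
    have := i.2
    have := i'.2
    rw [Finset.mem_Icc]
    push_cast
    omega
  rw [expand]
  have final : ∀ (i i' : Fin n), Q i i' * z ^ (((i' : ℕ) : ℤ) - ((i : ℕ) : ℤ))
      = ((starRingEnd ℂ) (b i * z ^ (i : ℕ))) * (b i' * z ^ (i' : ℕ)) := by
    intro i i'
    have hzz : z ^ (((i' : ℕ) : ℤ) - ((i : ℕ) : ℤ))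
        = (starRingEnd ℂ) (z ^ (i : ℕ)) * z ^ (i' : ℕ) := by
      rw [zpow_sub₀ hz0, zpow_natCast, zpow_natCast, map_pow, hzinv, inv_pow,
        div_eq_mul_inv, mul_comm]
    rw [hQb i i', hzz]
    simp only [_root_.map_mul]
    ring
  rw [Finset.sum_congr rfl fun i _ => Finset.sum_congr rfl fun i' _ => final i i']
  rw [hsE, map_sum, Finset.sum_mul_sum]
end
end

section
/- Let n ≥ 1 and let q_{t−1}, q_t, q_{t+1} be symmetric real-valued Laurent polynomials of degree less than n, written q_s(z) = ½ ∑_{j=0}^{n−1} a_j^{(s)} (z^j + z^{−j}) with real coefficient vectors a^{(s)} = (a_0^{(s)},…,a_{n−1}^{(s)}). Suppose q_t(z) = q_{t−1}(z) for every z with z^n = (−1)^t and q_{t+1}(z) = q_t(z) for every z with z^n = (−1)^{t+1}. Then a^{(t)} = ½(a^{(t−1)} + a^{(t+1)}) + ((−1)^t/2) · V_n (a^{(t−1)} − a^{(t+1)}), where V_n is the n×n permutation matrix that fixes coordinate 0 and reverses coordinates 1,…,n−1 (i.e., V_n = diag(I₁, X_{n−1}) with X_{n−1} the anti-diagonal permutation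 matrix). -/
noncomputable section
open Matrix Finset

/-- The permutation matrix `V_n = diag(I₁, X_{n-1})`, fixing coordinate `0` and reversing
coordinates `1, …, n-1` (so `V_n[i,j] = 1` iff `i = j = 0` or `i ≠ 0 ∧ i + j = n`). -/
def Vn (n : ℕ) : Matrix (Fin n) (Fin n) ℝ :=
  Matrix.of fun i j =>
    if ((i : ℕ) = 0 ∧ (j : ℕ) = 0) ∨ ((i : ℕ) ≠ 0 ∧ (i : ℕ) + (j : ℕ) = n) then 1 else 0

/-- Evaluation of the symmetric real-valued Laurent polynomial
`q(z) = ½ ∑_{j=0}^{n-1} a_j (z^j + z^{-j})` with real coefficient vector `a`. -/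
def qeval (n : ℕ) (a : Fin n → ℝ) (z : ℂ) : ℂ :=
  (1/2 : ℂ) * ∑ j : Fin n, (a j : ℂ) * (z ^ ((j : ℕ) : ℤ) + z ^ (-((j : ℕ) : ℤ)))

lemma fin_neg_val {n : ℕ} (j : Fin n) (hj : (j : ℕ) ≠ 0) :
    ((-j : Fin n) : ℕ) = n - (j : ℕ) := by
  have hlt := j.isLt
  rw [Fin.neg_def]
  exact Nat.mod_eq_of_lt (by omega)

lemma fin_neg_zero_val {n : ℕ} (j : Fin n) (hj : (j : ℕ) = 0) :
    ((-j : Fin n) : ℕ) = 0 := by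
  rw [Fin.neg_def, hj]
  simp

open Polynomial in
lemma key (n : ℕ) (hn : 0 < n) (ε : ℝ) (hε : ε ^ 2 = 1) (c : Fin n → ℝ)
    (h : ∀ z : ℂ, z ^ n = (ε : ℂ) → qeval n c z = 0) :
    c ⟨0, hn⟩ = 0 ∧ ∀ k : Fin n, c k + ε * c (-k) = 0 := by
  have hεc : (ε : ℂ) ^ 2 = 1 := by
    rw [← Complex.ofReal_pow, hε, Complex.ofReal_one]
  have hε0 : (ε : ℂ) ≠ 0 := by
    intro h0; rw [h0] at hεc; simp at hεc
  set i0 : Fin n := ⟨0, hn⟩ with hi0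
  have hnegi0 : -i0 = i0 := Fin.ext (fin_neg_zero_val i0 rfl)
  set B : Fin n → ℂ := fun j =>
    if (j : ℕ) = 0 then 2 * (c i0 : ℂ) else (c j : ℂ) + (ε : ℂ) * (c (-j) : ℂ) with hB
  set P : ℂ[X] := ∑ j : Fin n, C (B j) * X ^ (j : ℕ) with hP
  -- evaluation of P at points with z ^ n = ε
  have heval : ∀ z : ℂ, z ^ n = (ε : ℂ) → P.eval z = 0 := by
    intro z hz
    have hz0 : z ≠ 0 := by
      intro h0; rw [h0, zero_pow hn.ne'] at hz; exact hε0 hz.symm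
    have hneg : ∀ j : Fin n, (j : ℕ) ≠ 0 →
        z ^ (-((j : ℕ) : ℤ)) = (ε : ℂ) * z ^ (((-j : Fin n) : ℕ)) := by
      intro j hj
      have hmul : (ε : ℂ) * z ^ (((-j : Fin n) : ℕ)) * z ^ (j : ℕ) = 1 := by
        rw [mul_assoc, ← pow_add, fin_neg_val j hj, Nat.sub_add_cancel j.isLt.le, hz, ← sq, hεc]
      rw [_root_.zpow_neg, zpow_natCast]
      exact inv_eq_of_mul_eq_one_left hmul
    have hq := h z hz
    rw [qeval, mul_eq_zero] at hq
    rcases hq with hq | hq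
    · norm_num at hq
    have hPeval : P.eval z = ∑ j : Fin n, B j * z ^ (j : ℕ) := by
      rw [hP, Polynomial.eval_finset_sum]
      simp [Polynomial.eval_mul, Polynomial.eval_pow]
    rw [hPeval]
    have hmem : i0 ∈ (univ : Finset (Fin n)) := mem_univ _
    have hsum : ∑ j : Fin n, B j * z ^ (j : ℕ)
        = ∑ j : Fin n, (c j : ℂ) * (z ^ ((j : ℕ) : ℤ) + z ^ (-((j : ℕ) : ℤ))) := by
      rw [← Finset.add_sum_erase _ _ hmem, ← Finset.add_sum_erase _
        (fun j : Fin n => (c j : ℂ) * (z ^ ((j : ℕ) : ℤ) + z ^ (-((j : ℕ) : ℤ)))) hmem]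
      congr 1
      · simp [hB, hi0]
        ring
      have h2 : ∀ j ∈ univ.erase i0,
          (c j : ℂ) * (z ^ ((j : ℕ) : ℤ) + z ^ (-((j : ℕ) : ℤ)))
          = (c j : ℂ) * z ^ (j : ℕ) + (ε : ℂ) * (c j : ℂ) * z ^ (((-j : Fin n)) : ℕ) := by
        intro j hjm
        have hj : (j : ℕ) ≠ 0 := fun h0 => (Finset.mem_erase.mp hjm).1 (Fin.ext h0)
        rw [hneg j hj, zpow_natCast]; ring
      have h3 : ∑ j ∈ univ.erase i0, (ε : ℂ) * (c j : ℂ) * z ^ (((-j : Fin n)) : ℕ)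
          = ∑ j ∈ univ.erase i0, (ε : ℂ) * (c (-j) : ℂ) * z ^ (j : ℕ) := by
        apply Finset.sum_nbij' (fun j => -j) (fun j => -j)
        · intro a ha
          simp only [Finset.mem_erase, Finset.mem_univ, and_true] at ha ⊢
          intro h0
          exact ha (by rw [← neg_neg a, h0, hnegi0])
        · intro a ha
          simp only [Finset.mem_erase, Finset.mem_univ, and_true] at ha ⊢
          intro h0
          exact ha (by rw [← neg_neg a, h0, hnegi0])
        · intro a _; rw [neg_neg]
        · intro a _; rw [neg_neg]
        · intro a _; rw [neg_neg]
      have h4 : ∀ j ∈ univ.erase i0,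
          B j * z ^ (j : ℕ)
            = (c j : ℂ) * z ^ (j : ℕ) + (ε : ℂ) * (c (-j) : ℂ) * z ^ (j : ℕ) := by
        intro j hjm
        have hj : (j : ℕ) ≠ 0 := fun h0 => (Finset.mem_erase.mp hjm).1 (Fin.ext h0)
        rw [hB]; simp only []; rw [if_neg hj]; ring
      rw [Finset.sum_congr rfl h2, Finset.sum_add_distrib, h3,
        Finset.sum_congr rfl h4, Finset.sum_add_distrib]
    rw [hsum]; exact hq
  -- degree bound
  have hPdeg : P.natDegree < n := by
    have hle : P.natDegree ≤ n - 1 := by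
      apply Polynomial.natDegree_sum_le_of_forall_le
      intro j _
      exact (Polynomial.natDegree_C_mul_X_pow_le _ _).trans (by have := j.isLt; omega)
    omega
  -- P vanishes at n distinct points, hence P = 0
  obtain ⟨ζ, hζ⟩ := IsAlgClosed.exists_pow_nat_eq (ε : ℂ) hn
  have hζ0 : ζ ≠ 0 := by
    intro h0; rw [h0, zero_pow hn.ne'] at hζ; exact hε0 hζ.symm
  have hω := Complex.isPrimitiveRoot_exp n hn.ne'
  set ω : ℂ := Complex.exp (2 * Real.pi * Complex.I / n) with hωdef
  have hf : Function.Injective (fun m : Fin n => ω ^ (m : ℕ) * ζ) := by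
    intro a b hab
    refine Fin.ext (hω.injOn_pow_mul hζ0 ?_ ?_ hab) <;>
      simp [Finset.mem_coe, Finset.mem_range, a.isLt, b.isLt]
  have hP0 : P = 0 := by
    apply Polynomial.eq_zero_of_natDegree_lt_card_of_eval_eq_zero P hf
    · intro m
      apply heval
      rw [mul_pow, ← pow_mul, mul_comm (m : ℕ) n, pow_mul, hω.pow_eq_one, one_pow, one_mul, hζ]
    · simpa using hPdeg
  -- extract coefficients
  have hBzero : ∀ k : Fin n, B k = 0 := by
    intro k
    have hcoeff : P.coeff (k : ℕ) = B k := by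
      rw [hP, Polynomial.finset_sum_coeff]
      simp only [Polynomial.coeff_C_mul, Polynomial.coeff_X_pow]
      rw [Finset.sum_eq_single k]
      · simp
      · intro b _ hbk
        rw [if_neg (fun hc => hbk (Fin.ext hc.symm)), mul_zero]
      · intro hk; exact absurd (mem_univ k) hk
    rw [← hcoeff, hP0]
    simp
  have hc0 : c i0 = 0 := by
    have h0 := hBzero i0
    rw [hB] at h0
    simp only [hi0, if_pos rfl] at h0
    have h0' : (c i0 : ℂ) = 0 := by
      field_simp at h0
      simpa [hi0] using h0
    exact_mod_cast h0'
  refine ⟨hc0, fun k => ?_⟩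
  by_cases hk : (k : ℕ) = 0
  · have hki : k = i0 := Fin.ext hk
    rw [hki, hnegi0, hc0]
    ring
  · have h0 := hBzero k
    rw [hB] at h0
    simp only [if_neg hk] at h0
    have h0' : ((c k + ε * c (-k) : ℝ) : ℂ) = 0 := by push_cast; exact h0
    exact_mod_cast h0'

lemma qeval_sub (n : ℕ) (a b : Fin n → ℝ) (z : ℂ) :
    qeval n (a - b) z = qeval n a z - qeval n b z := by
  simp only [qeval, Pi.sub_apply, Complex.ofReal_sub]
  rw [← mul_sub, ← Finset.sum_sub_distrib]
  congr 1
  apply Finset.sum_congr rfl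
  intro j _
  ring

lemma Vn_mulVec (n : ℕ) (hn : 0 < n) (v : Fin n → ℝ) (i : Fin n) :
    (Vn n).mulVec v i = v (-i) := by
  rw [Matrix.mulVec, dotProduct]
  have hterm : ∀ j : Fin n, Vn n i j * v j = if j = -i then v j else 0 := by
    intro j
    have hcond : (((i : ℕ) = 0 ∧ (j : ℕ) = 0) ∨ ((i : ℕ) ≠ 0 ∧ (i : ℕ) + (j : ℕ) = n))
        ↔ j = -i := by
      rw [Fin.ext_iff]
      by_cases hi : (i : ℕ) = 0
      · rw [fin_neg_zero_val i hi]
        have := j.isLt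
        omega
      · rw [fin_neg_val i hi]
        have := j.isLt
        have := i.isLt
        omega
    rw [show Vn n i j = if j = -i then 1 else 0 from by
      rw [Vn, Matrix.of_apply]; exact if_congr hcond rfl rfl]
    rw [ite_mul, one_mul, zero_mul]
  rw [Finset.sum_congr rfl fun j _ => hterm j, Finset.sum_ite_eq' univ (-i) v,
    if_pos (mem_univ _)]

/-- The forward-step constraints linking `q_{t-1}, q_t, q_{t+1}` determine `q_t`:
`a^{(t)} = ½(a^{(t-1)} + a^{(t+1)}) + ((-1)^t/2) V_n (a^{(t-1)} - a^{(t+1)})`. -/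
theorem stmt_16 (n : ℕ) (hn : 0 < n) (t : ℤ) (am a0 ap : Fin n → ℝ)
    (h1 : ∀ z : ℂ, z ^ n = (-1 : ℂ) ^ t → qeval n a0 z = qeval n am z)
    (h2 : ∀ z : ℂ, z ^ n = (-1 : ℂ) ^ (t + 1) → qeval n ap z = qeval n a0 z) :
    a0 = (1/2 : ℝ) • (am + ap) +
      ((-1 : ℝ) ^ t * (1/2)) • (Vn n).mulVec (am - ap) := by
  set ε : ℝ := (-1 : ℝ) ^ t with hεdef
  have hε : ε ^ 2 = 1 := by
    rcases Int.even_or_odd t with he | ho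
    · rw [hεdef, he.neg_one_zpow]; norm_num
    · rw [hεdef, ho.neg_one_zpow]; norm_num
  have hcast : ((ε : ℝ) : ℂ) = (-1 : ℂ) ^ t := by
    rw [hεdef]
    push_cast
    ring
  have hcast2 : ((-ε : ℝ) : ℂ) = (-1 : ℂ) ^ (t + 1) := by
    rw [zpow_add_one₀ (by norm_num : (-1 : ℂ) ≠ 0) t]
    push_cast [← hcast]
    ring
  have hε2 : (-ε) ^ 2 = 1 := by rw [neg_pow]; simpa using hε
  have k1 := key n hn ε hε (a0 - am) (by
    intro z hz
    rw [qeval_sub, h1 z (by rw [hz, hcast]), sub_self])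
  have k2 := key n hn (-ε) hε2 (ap - a0) (by
    intro z hz
    rw [qeval_sub, h2 z (by rw [hz]; push_cast [hcast2]; norm_num), sub_self])
  funext i
  have hA := k1.2 (-i)
  have hB := k2.2 (-i)
  rw [neg_neg] at hA hB
  simp only [Pi.sub_apply] at hA hB
  simp only [Pi.add_apply, Pi.smul_apply, smul_eq_mul, Pi.sub_apply,
    Vn_mulVec n hn _ i, ← hεdef]
  linear_combination (ε/2) * hA + (ε/2) * hB - ((2 * a0 i - am i - ap i)/2) * hε
end
end

section
/- Let n ≥ 1 and let A be an n×n complex positive semidefinite matrix satisfying tr_l(A) + tr_{n−l}(A) = 1 for every l with 0 ≤ l < n (with the convention tr_n(A) = 0). Then A = J_n/n, where J_n is the n×n all-ones matrix. -/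
noncomputable section
open Matrix Finset
open scoped ComplexOrder

private lemma aux1 (n : ℕ) (i i' : Fin n) (x : ℂ) :
    (∑ l ∈ Finset.range n, if ((i' : ℕ) : ℤ) - ((i : ℕ) : ℤ) = (l : ℤ) then x else 0)
      = if i ≤ i' then x else 0 := by
  by_cases hle : i ≤ i'
  · have hle' : (i : ℕ) ≤ (i' : ℕ) := hle
    rw [Finset.sum_eq_single ((i' : ℕ) - (i : ℕ))]
    · rw [if_pos (by omega), if_pos hle]
    · intro b _ hb
      rw [if_neg]; omega
    · intro hmem
      exact absurd (Finset.mem_range.mpr (by omega)) hmem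
  · have hlt : (i' : ℕ) < (i : ℕ) := Fin.lt_def.mp (not_le.mp hle)
    rw [if_neg hle]
    refine Finset.sum_eq_zero fun l hl => ?_
    rw [if_neg]; omega

private lemma aux2 (n : ℕ) (i i' : Fin n) (x : ℂ) :
    (∑ l ∈ Finset.range n, if ((i' : ℕ) : ℤ) - ((i : ℕ) : ℤ) = (n : ℤ) - (l : ℤ) then x else 0)
      = if i < i' then x else 0 := by
  have hi := i.isLt
  have hi' := i'.isLt
  by_cases hlt : i < i'
  · have hlt' : (i : ℕ) < (i' : ℕ) := hlt
    rw [Finset.sum_eq_single (n - ((i' : ℕ) - (i : ℕ)))]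
    · rw [if_pos (by omega), if_pos hlt]
    · intro b hb hbne
      have := Finset.mem_range.mp hb
      rw [if_neg]; omega
    · intro hmem
      exact absurd (Finset.mem_range.mpr (by omega)) hmem
  · have hge : (i' : ℕ) ≤ (i : ℕ) := Fin.le_def.mp (not_lt.mp hlt)
    rw [if_neg hlt]
    refine Finset.sum_eq_zero fun l hl => ?_
    have := Finset.mem_range.mp hl
    rw [if_neg]; omega

/-- The unique `n × n` positive semidefinite matrix `A` with
`tr_l(A) + tr_{n-l}(A) = 1` for every `0 ≤ l < n` is `A = J_n / n`. -/
theorem stmt_18 (n : ℕ) (hn : 0 < n) (A : Matrix (Fin n) (Fin n) ℂ)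
    (hA : A.PosSemidef)
    (h : ∀ l : ℕ, l < n → gtr n A (l : ℤ) + gtr n A ((n : ℤ) - (l : ℤ)) = 1) :
    A = Matrix.of (fun _ _ => 1 / (n : ℂ)) := by
  have hn0 : (n : ℂ) ≠ 0 := Nat.cast_ne_zero.mpr hn.ne'
  -- trace of A is 1
  have htr : (∑ i, A i i) = 1 := by
    have h0 := h 0 hn
    have hg0 : gtr n A ((0 : ℕ) : ℤ) = ∑ i, A i i := by
      refine Finset.sum_congr rfl fun i _ => ?_
      rw [Finset.sum_eq_single i]
      · simp
      · intro b _ hb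
        rw [if_neg]
        intro hc
        exact hb (Fin.ext (by omega))
      · simp
    have hgn : gtr n A ((n : ℤ) - ((0 : ℕ) : ℤ)) = 0 := by
      refine Finset.sum_eq_zero fun i _ => Finset.sum_eq_zero fun i' _ => ?_
      have := i'.isLt
      rw [if_neg]; omega
    rw [hg0, hgn, add_zero] at h0
    exact h0
  -- sum over l of the hypothesis
  have hsum : (∑ l ∈ Finset.range n, (gtr n A (l : ℤ) + gtr n A ((n : ℤ) - (l : ℤ)))) = n := by
    rw [Finset.sum_congr rfl fun l hl => h l (Finset.mem_range.mp hl)]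
    simp
  set S1 : ℂ := ∑ i : Fin n, ∑ i' : Fin n, if i ≤ i' then A i i' else 0 with hS1
  set S2 : ℂ := ∑ i : Fin n, ∑ i' : Fin n, if i < i' then A i i' else 0 with hS2def
  have hexp : S1 + S2 = n := by
    rw [← hsum, Finset.sum_add_distrib]
    congr 1
    · unfold gtr
      rw [Finset.sum_comm]
      refine Finset.sum_congr rfl fun i _ => ?_
      rw [Finset.sum_comm]
      exact Finset.sum_congr rfl fun i' _ => (aux1 n i i' (A i i')).symm
    · unfold gtr
      rw [Finset.sum_comm]
      refine Finset.sum_congr rfl fun i _ => ?_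
      rw [Finset.sum_comm]
      exact Finset.sum_congr rfl fun i' _ => (aux2 n i i' (A i i')).symm
  have hsplit : S1 = 1 + S2 := by
    rw [hS1, hS2def, ← htr, ← Finset.sum_add_distrib]
    refine Finset.sum_congr rfl fun i _ => ?_
    have : (∑ i' : Fin n, if i ≤ i' then A i i' else 0)
        = ∑ i' : Fin n, ((if i = i' then A i i' else 0) + (if i < i' then A i i' else 0)) := by
      refine Finset.sum_congr rfl fun i' _ => ?_
      rcases lt_trichotomy i i' with hlt | heq | hgt
      · rw [if_pos hlt.le, if_neg hlt.ne, if_pos hlt, zero_add]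
      · rw [if_pos heq.le, if_pos heq, if_neg (by simp [heq]), add_zero, heq]
      · rw [if_neg (not_le.mpr hgt), if_neg (by exact fun hc => absurd hc (by simp [hgt.ne'])),
          if_neg (not_lt.mpr hgt.le), add_zero]
    rw [this, Finset.sum_add_distrib]
    congr 1
    simp
  have hS2 : S2 = ((n : ℂ) - 1) / 2 := by
    have h2 : (1 + S2) + S2 = (n : ℂ) := by rw [← hsplit]; exact hexp
    rw [eq_div_iff (two_ne_zero (α := ℂ))]
    linear_combination h2
  -- total sum of entries
  have hT : (∑ i : Fin n, ∑ i' : Fin n, A i i') = n := by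
    have hdecomp : (∑ i : Fin n, ∑ i' : Fin n, A i i')
        = (∑ i, A i i) + S2 + ∑ i : Fin n, ∑ i' : Fin n, (if i' < i then A i i' else 0) := by
      have e : ∀ i i' : Fin n, A i i' = (if i = i' then A i i' else 0)
          + (if i < i' then A i i' else 0) + (if i' < i then A i i' else 0) := by
        intro i i'
        rcases lt_trichotomy i i' with hlt | heq | hgt
        · rw [if_neg hlt.ne, if_pos hlt, if_neg (not_lt.mpr hlt.le)]; ring
        · rw [if_pos heq, if_neg (by simp [heq]), if_neg (by simp [heq]), heq]; ring
        · rw [if_neg (by exact fun hc => absurd hc (by simp [hgt.ne'])),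
            if_neg (not_lt.mpr hgt.le), if_pos hgt]; ring
      calc (∑ i : Fin n, ∑ i' : Fin n, A i i')
          = ∑ i : Fin n, ∑ i' : Fin n, ((if i = i' then A i i' else 0)
            + (if i < i' then A i i' else 0) + (if i' < i then A i i' else 0)) :=
            Finset.sum_congr rfl fun i _ => Finset.sum_congr rfl fun i' _ => e i i'
        _ = (∑ i : Fin n, ∑ i' : Fin n, (if i = i' then A i i' else 0)) + S2
            + ∑ i : Fin n, ∑ i' : Fin n, (if i' < i then A i i' else 0) := by
            rw [hS2def]
            simp [Finset.sum_add_distrib]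
        _ = (∑ i, A i i) + S2
            + ∑ i : Fin n, ∑ i' : Fin n, (if i' < i then A i i' else 0) := by
            congr 1
            congr 1
            simp
    have hlow : (∑ i : Fin n, ∑ i' : Fin n, (if i' < i then A i i' else 0))
        = (starRingEnd ℂ) S2 := by
      rw [hS2def, map_sum]
      rw [Finset.sum_comm]
      refine Finset.sum_congr rfl fun i _ => ?_
      rw [map_sum]
      refine Finset.sum_congr rfl fun i' _ => ?_
      by_cases hlt : i < i'
      · rw [if_pos hlt, if_pos hlt]
        have := congrFun (congrFun hA.isHermitian i') i
        simpa [Matrix.conjTranspose_apply] using this.symm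
      · rw [if_neg hlt, if_neg hlt, map_zero]
    rw [hdecomp, htr, hlow, hS2]
    have : (starRingEnd ℂ) (((n : ℂ) - 1) / 2) = ((n : ℂ) - 1) / 2 := by
      rw [map_div₀, map_sub, _root_.map_one, map_natCast, map_ofNat]
    rw [this]
    field_simp
    ring
  -- the PSD argument
  obtain ⟨B, hB⟩ : ∃ B : Matrix (Fin n) (Fin n) ℂ, A = Bᴴ * B := by
    open scoped MatrixOrder in exact CStarAlgebra.nonneg_iff_eq_star_mul_self.mp hA.nonneg
  set P : Matrix (Fin n) (Fin n) ℂ := Matrix.of (fun _ _ => 1 / (n : ℂ)) with hP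
  have hPherm : Pᴴ = P := by
    ext i j
    simp [hP, Matrix.conjTranspose_apply, map_div₀]
  set D : Matrix (Fin n) (Fin n) ℂ := B * (1 - P) with hD
  -- trace computations
  have hAP : (A * P).trace = 1 := by
    rw [Matrix.trace]
    simp only [Matrix.diag_apply, Matrix.mul_apply, hP, Matrix.of_apply]
    have : ∀ i : Fin n, (∑ j : Fin n, A i j * (1 / (n : ℂ)))
        = (∑ j : Fin n, A i j) * (1 / (n : ℂ)) := fun i => by rw [Finset.sum_mul]
    rw [Finset.sum_congr rfl fun i _ => this i, ← Finset.sum_mul, hT]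
    field_simp
  have hPA : (P * A).trace = 1 := by
    rw [Matrix.trace]
    simp only [Matrix.diag_apply, Matrix.mul_apply, hP, Matrix.of_apply]
    have : ∀ i : Fin n, (∑ j : Fin n, (1 / (n : ℂ)) * A j i)
        = (1 / (n : ℂ)) * (∑ j : Fin n, A j i) := fun i => by rw [Finset.mul_sum]
    rw [Finset.sum_congr rfl fun i _ => this i, ← Finset.mul_sum, Finset.sum_comm, hT]
    field_simp
  have hPAP : P * A * P = P := by
    ext i j
    simp only [Matrix.mul_apply, hP, Matrix.of_apply]
    have : (∑ l : Fin n, (∑ k : Fin n, (1 / (n : ℂ)) * A k l) * (1 / (n : ℂ)))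
        = (1 / (n : ℂ)) * (∑ l : Fin n, ∑ k : Fin n, A k l) * (1 / (n : ℂ)) := by
      rw [← Finset.sum_mul, Finset.mul_sum]
      congr 1
      exact Finset.sum_congr rfl fun l _ => by rw [Finset.mul_sum]
    rw [this, Finset.sum_comm, hT]
    field_simp
  have htrA : A.trace = 1 := by
    rw [Matrix.trace]
    simpa [Matrix.diag_apply] using htr
  have htrP : P.trace = 1 := by
    rw [Matrix.trace]
    simp only [Matrix.diag_apply, hP, Matrix.of_apply]
    rw [Finset.sum_const, Finset.card_univ, Fintype.card_fin, nsmul_eq_mul]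
    field_simp
  have htrD : (Dᴴ * D).trace = 0 := by
    have hDD : Dᴴ * D = (1 - P) * A * (1 - P) := by
      rw [hD, Matrix.conjTranspose_mul, Matrix.conjTranspose_sub, hPherm,
        Matrix.conjTranspose_one, hB]
      noncomm_ring
    have hexp2 : (1 - P) * A * (1 - P) = A - P * A - A * P + P * A * P := by noncomm_ring
    rw [hDD, hexp2, Matrix.trace_add, Matrix.trace_sub, Matrix.trace_sub, htrA, hPA, hAP,
      hPAP, htrP]
    ring
  have hD0 : D = 0 := by
    have hexp3 : (Dᴴ * D).trace = ∑ j : Fin n, ∑ k : Fin n, star (D k j) * D k j := by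
      rw [Matrix.trace]
      simp [Matrix.diag_apply, Matrix.mul_apply, Matrix.conjTranspose_apply]
    rw [hexp3] at htrD
    have hnn : ∀ j ∈ (Finset.univ : Finset (Fin n)),
        (0 : ℂ) ≤ ∑ k : Fin n, star (D k j) * D k j :=
      fun j _ => Finset.sum_nonneg fun k _ => star_mul_self_nonneg _
    have hcol := (Finset.sum_eq_zero_iff_of_nonneg hnn).mp htrD
    ext k j
    have hterm := (Finset.sum_eq_zero_iff_of_nonneg
      (fun k _ => star_mul_self_nonneg (D k j))).mp
      (hcol j (Finset.mem_univ j)) k (Finset.mem_univ k)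
    have : D k j = 0 := by
      rcases mul_eq_zero.mp hterm with h' | h'
      · exact star_eq_zero.mp h'
      · exact h'
    simpa using this
  have hBP : B = B * P := by
    have h1 : B * (1 - P) = 0 := by rw [← hD]; exact hD0
    rw [Matrix.mul_sub, Matrix.mul_one] at h1
    exact sub_eq_zero.mp h1
  have hAP' : A = A * P := by
    conv_rhs => rw [hB, Matrix.mul_assoc, ← hBP, ← hB]
  have hPA' : A = P * A := by
    calc A = Aᴴ := hA.isHermitian.symm
    _ = (A * P)ᴴ := by rw [← hAP']
    _ = Pᴴ * Aᴴ := by rw [Matrix.conjTranspose_mul]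
    _ = P * A := by rw [hPherm, hA.isHermitian]
  calc A = A * P := hAP'
  _ = (P * A) * P := by rw [← hPA']
  _ = P := hPAP
end
end
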